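/- (Breakdown point lower bound, additive corruption) Let p* be a Borel probability measure on ℝ^d that is halfspace-symmetric with center μ*, and let 0 ≤ ε < 1/3. Then there exists a finite constant B such that for every Borel probability measure r on ℝ^d, setting p = (1 − ε)p* + εr, every Tukey median x of p satisfies ‖x − μ*‖ ≤ B. (Hence the breakdown point of the Tukey median under additive corruption is at least 1/3 for every halfspace-symmetric distribution.) -/

import Mathlib

/-!
Halfspace symmetry gives every closed halfspace through `μ*` at least half of the `p*`-mass, so
`μ*` has depth at least `(1 - ε) / 2` in `p = (1 - ε) p* + ε r`. The halfspace
`{y | ⟪x - μ*, y - x⟫ ≥ 0}` bounding the depth of a point `x` lies outside the open ball of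
radius `‖x - μ*‖` about `μ*`, so its `p`-mass is at most the `p*`-tail outside that ball plus `ε`.
Once the radius is so large that this tail is below `(1 - 3ε) / 2`, the depth of `x` is below
`(1 - ε) / 2`, and `x` cannot be a Tukey median.
-/

open MeasureTheory Filter Metric
open scoped RealInnerProductSpace ENNReal Topology

noncomputable section

abbrev Euc (d : ℕ) := EuclideanSpace ℝ (Fin d)

def tukeyDepth {d : ℕ} (μ : Euc d) (p : Measure (Euc d)) : ℝ :=
  ⨅ v : {v : Euc d // v ≠ 0}, (p {x | 0 ≤ ⟪(v : Euc d), x - μ⟫}).toReal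

def IsTukeyMedian {d : ℕ} (x : Euc d) (p : Measure (Euc d)) : Prop :=
  ∀ y : Euc d, tukeyDepth y p ≤ tukeyDepth x p

def tvDist {d : ℕ} (p q : Measure (Euc d)) : ℝ :=
  ⨆ A : {A : Set (Euc d) // MeasurableSet A}, ((p A).toReal - (q A).toReal)

/-- The halfspace metric `TV~(p, q)`. -/
def halfspaceDist {d : ℕ} (p q : Measure (Euc d)) : ℝ :=
  ⨆ vt : Euc d × ℝ,
    |(p {x | vt.2 ≤ ⟪vt.1, x⟫}).toReal - (q {x | vt.2 ≤ ⟪vt.1, x⟫}).toReal|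

def IsHalfspaceSymmetric {d : ℕ} (p : Measure (Euc d)) (μ : Euc d) : Prop :=
  ∀ v : Euc d,
    p.map (fun x => ⟪v, x - μ⟫) = p.map (fun x => -⟪v, x - μ⟫)

/-- Decay function `h(t)` of a measure `p` centered at `μ`. -/
def decay {d : ℕ} (p : Measure (Euc d)) (μ : Euc d) (t : ℝ) : ℝ :=
  ⨆ v : {v : Euc d // ‖v‖ ≤ 1}, (p {x | t < ⟪(v : Euc d), x - μ⟫}).toReal

end

lemma tendsto_measureReal_compl_closedBall_atTop {α : Type*} [MeasurableSpace α]
    [PseudoMetricSpace α] [CompleteSpace α] [SecondCountableTopology α] [BorelSpace α]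
    (p : Measure α) [IsFiniteMeasure p] (c : α) :
    Tendsto (fun R : ℝ => p.real (closedBall c R)ᶜ) atTop (𝓝 0) := by
  have h := tendsto_measure_compl_closedBall_of_isTightMeasureSet
    (isTightMeasureSet_singleton (μ := p)) c
  simp only [Set.mem_singleton_iff, iSup_iSup_eq_left] at h
  exact (ENNReal.tendsto_toReal ENNReal.zero_ne_top).comp h

lemma measureReal_convexCombination_apply {α : Type*} [MeasurableSpace α] (p r : Measure α)
    [IsFiniteMeasure p] [IsFiniteMeasure r] {ε : ℝ} (hε0 : 0 ≤ ε) (hε1 : ε ≤ 1) (s : Set α) :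
    (ENNReal.ofReal (1 - ε) • p + ENNReal.ofReal ε • r).real s
      = (1 - ε) * p.real s + ε * r.real s := by
  rw [measureReal_add_apply (by simp [ENNReal.mul_ne_top]) (by simp [ENNReal.mul_ne_top]),
    measureReal_ennreal_smul_apply, measureReal_ennreal_smul_apply,
    ENNReal.toReal_ofReal hε0, ENNReal.toReal_ofReal (by linarith)]

lemma isProbabilityMeasure_convexCombination {α : Type*} [MeasurableSpace α] (p r : Measure α)
    [IsProbabilityMeasure p] [IsProbabilityMeasure r] {ε : ℝ} (hε0 : 0 ≤ ε) (hε1 : ε ≤ 1) :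
    IsProbabilityMeasure (ENNReal.ofReal (1 - ε) • p + ENNReal.ofReal ε • r) := by
  rw [isProbabilityMeasure_iff_real, measureReal_convexCombination_apply p r hε0 hε1,
    probReal_univ, probReal_univ]
  ring

lemma norm_sub_le_norm_sub_of_inner_nonneg {E : Type*} [NormedAddCommGroup E]
    [InnerProductSpace ℝ E] {x y μ : E} (h : 0 ≤ ⟪x - μ, y - x⟫) : ‖x - μ‖ ≤ ‖y - μ‖ := by
  have hsq : ‖y - μ‖ ^ 2 = ‖x - μ‖ ^ 2 + 2 * ⟪x - μ, y - x⟫ + ‖y - x‖ ^ 2 := by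
    rw [← norm_add_sq_real, sub_add_sub_cancel']
  nlinarith [norm_nonneg (x - μ), norm_nonneg (y - μ), sq_nonneg ‖y - x‖]

variable {d : ℕ}

lemma tukeyDepth_le_measureReal (p : Measure (Euc d)) (μ : Euc d) {v : Euc d} (hv : v ≠ 0) :
    tukeyDepth μ p ≤ p.real {x | 0 ≤ ⟪v, x - μ⟫} :=
  ciInf_le ⟨0, by rintro _ ⟨w, rfl⟩; exact ENNReal.toReal_nonneg⟩ (⟨v, hv⟩ : {v : Euc d // v ≠ 0})

lemma le_tukeyDepth [Nontrivial (Euc d)] {p : Measure (Euc d)} {μ : Euc d} {c : ℝ}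
    (h : ∀ v : Euc d, v ≠ 0 → c ≤ p.real {x | 0 ≤ ⟪v, x - μ⟫}) : c ≤ tukeyDepth μ p :=
  have : Nonempty {v : Euc d // v ≠ 0} := nonempty_subtype.2 (exists_ne 0)
  le_ciInf fun v => h v v.2

lemma tukeyDepth_le_measureReal_norm_sub_ge (p : Measure (Euc d)) [IsFiniteMeasure p]
    {x μ : Euc d} (hx : x ≠ μ) :
    tukeyDepth x p ≤ p.real {y | ‖x - μ‖ ≤ ‖y - μ‖} :=
  (tukeyDepth_le_measureReal p x (sub_ne_zero.2 hx)).trans <|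
    measureReal_mono fun _ hy => norm_sub_le_norm_sub_of_inner_nonneg hy

lemma IsHalfspaceSymmetric.one_half_le_measureReal {p : Measure (Euc d)}
    [IsProbabilityMeasure p] {μ : Euc d} (hsym : IsHalfspaceSymmetric p μ) (v : Euc d) :
    1 / 2 ≤ p.real {x | 0 ≤ ⟪v, x - μ⟫} := by
  set f : Euc d → ℝ := fun x => ⟪v, x - μ⟫
  have hf : Measurable f := (continuous_const.inner (continuous_id.sub continuous_const)).measurable
  have hflip : p.real {x | f x ≤ 0} = p.real {x | 0 ≤ f x} := by
    calc p.real {x | f x ≤ 0} = (p.map (fun x => -f x)).real (Set.Ici 0) := by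
          rw [map_measureReal_apply (f := fun x => -f x) hf.neg measurableSet_Ici]
          simp [Set.preimage]
      _ = (p.map f).real (Set.Ici 0) := by rw [hsym v]
      _ = p.real {x | 0 ≤ f x} := map_measureReal_apply hf measurableSet_Ici
  have hcover : p.real Set.univ ≤ p.real ({x | 0 ≤ f x} ∪ {x | f x ≤ 0}) :=
    measureReal_mono fun x _ => le_total 0 (f x)
  have := measureReal_union_le (μ := p) {x | 0 ≤ f x} {x | f x ≤ 0}
  rw [probReal_univ] at hcover
  linarith

lemma IsHalfspaceSymmetric.le_tukeyDepth_convexCombination [Nontrivial (Euc d)]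
    {p : Measure (Euc d)} [IsProbabilityMeasure p] {μ : Euc d} (hsym : IsHalfspaceSymmetric p μ)
    (r : Measure (Euc d)) [IsProbabilityMeasure r] {ε : ℝ} (hε0 : 0 ≤ ε) (hε1 : ε ≤ 1) :
    (1 - ε) / 2 ≤ tukeyDepth μ (ENNReal.ofReal (1 - ε) • p + ENNReal.ofReal ε • r) :=
  le_tukeyDepth fun v _ => by
    rw [measureReal_convexCombination_apply p r hε0 hε1]
    nlinarith [hsym.one_half_le_measureReal v,
      measureReal_nonneg (μ := r) (s := {x | 0 ≤ ⟪v, x - μ⟫})]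

/-- **Breakdown point lower bound, additive corruption.**
If `p*` is halfspace-symmetric with center `μ*` and `0 ≤ ε < 1/3`, then there is
a finite constant `B` such that for every probability measure `r`, every Tukey
median of `p = (1 − ε) p* + ε r` is within distance `B` of `μ*`. -/
theorem tukey_breakdown_additive {d : ℕ}
    (pstar : Measure (Euc d)) [IsProbabilityMeasure pstar]
    (μstar : Euc d) (hsym : IsHalfspaceSymmetric pstar μstar)
    (ε : ℝ) (hε0 : 0 ≤ ε) (hε : ε < 1 / 3) :
    ∃ B : ℝ, ∀ r : Measure (Euc d), IsProbabilityMeasure r →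
      ∀ x : Euc d,
        IsTukeyMedian x (ENNReal.ofReal (1 - ε) • pstar + ENNReal.ofReal ε • r) →
        ‖x - μstar‖ ≤ B := by
  have hδ : 0 < (1 - 3 * ε) / 2 := by linarith
  obtain ⟨R, hR, hR0⟩ := (((tendsto_measureReal_compl_closedBall_atTop pstar μstar).eventually
    (gt_mem_nhds hδ)).and (eventually_ge_atTop 0)).exists
  refine ⟨R, fun r _ x hx => ?_⟩
  by_contra! hfar
  have hxμ : x ≠ μstar := by rintro rfl; rw [sub_self, norm_zero] at hfar; linarith
  have : Nontrivial (Euc d) := nontrivial_of_ne _ _ (sub_ne_zero.2 hxμ)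
  have h_tail : pstar.real {y | ‖x - μstar‖ ≤ ‖y - μstar‖} < (1 - 3 * ε) / 2 :=
    (measureReal_mono fun y hy => by
      simpa [dist_eq_norm] using hfar.trans_le hy).trans_lt hR
  have := isProbabilityMeasure_convexCombination pstar r hε0 (by linarith)
  have h_x := tukeyDepth_le_measureReal_norm_sub_ge
    (ENNReal.ofReal (1 - ε) • pstar + ENNReal.ofReal ε • r) hxμ
  rw [measureReal_convexCombination_apply pstar r hε0 (by linarith)] at h_x
  have h_center := hsym.le_tukeyDepth_convexCombination r hε0 (by linarith)
  nlinarith [hx μstar, measureReal_nonneg (μ := pstar) (s := {y | ‖x - μstar‖ ≤ ‖y - μstar‖}),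
    measureReal_le_one (μ := r) (s := {y | ‖x - μstar‖ ≤ ‖y - μstar‖})]
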